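/- arXiv:2405.07811 — 3 statements merged into one kernel-verified Lean document; each statement's English description precedes it below -/
import Mathlib

section
/- For all natural numbers m and n, the Gram coefficients satisfy a_{m,n} = (−1)^m · √( (m+n)! / (m! · n!) ) · a_{0, m+n}. -/
open Real MeasureTheory Matrix Filter

/-- Physicists' Hermite polynomials: H_0 = 1, H_1 = 2x, H_{n+1} = 2x H_n - 2n H_{n-1}. -/
noncomputable def hermiteH : ℕ → ℝ → ℝ
  | 0, _ => 1
  | 1, x => 2 * x
  | (n + 2), x => 2 * x * hermiteH (n + 1) x - 2 * (n + 1) * hermiteH n x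

/-- Asymmetric Hermite basis function ψ_m. -/
noncomputable def psi (T : ℝ) (m : ℕ) (v : ℝ) : ℝ :=
  Real.exp (-v ^ 2 / T) * T ^ (-(1 : ℝ) / 2) *
    ((2 : ℝ) ^ m * (Nat.factorial m : ℝ) * Real.sqrt π) ^ (-(1 : ℝ) / 2) *
    hermiteH m (v / Real.sqrt T)

/-- Gram coefficient a_{m,n} = ∫ ψ_m ψ_n. -/
noncomputable def gramA (T : ℝ) (m n : ℕ) : ℝ := ∫ v : ℝ, psi T m v * psi T n v


/-! With `H (n+1) = 2x H n - (H n)'`, the sum `H (m+1) H n + H m H (n+1)` equals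
`4x H m H n - (H m H n)'`, whose integral against `exp (-2x²)` vanishes by integration by parts.
So moving one index from the left factor to the right flips the sign of `∫ exp (-2x²) H m H n`.
After the substitution `v = √T x` only the normalising constants `(2^m m! √π)^(-1/2)` remain
to be compared. -/

open Polynomial

noncomputable def hermitePoly : ℕ → ℝ[X]
  | 0 => 1
  | n + 1 => C 2 * X * hermitePoly n - derivative (hermitePoly n)

theorem derivative_hermitePoly_succ (n : ℕ) :
    derivative (hermitePoly (n + 1)) = C (2 * ((n : ℝ) + 1)) * hermitePoly n := by
  induction n with
  | zero => simp [hermitePoly]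
  | succ n ih =>
    rw [hermitePoly, derivative_sub, derivative_mul, ih, hermitePoly]
    simp only [derivative_mul, derivative_C, derivative_X]
    push_cast
    simp only [map_mul, map_add, map_ofNat, map_natCast, map_one]
    ring

theorem hermitePoly_succ_succ (n : ℕ) :
    hermitePoly (n + 2) =
      C 2 * X * hermitePoly (n + 1) - C (2 * ((n : ℝ) + 1)) * hermitePoly n := by
  rw [hermitePoly, derivative_hermitePoly_succ]

theorem eval_hermitePoly (n : ℕ) (x : ℝ) : (hermitePoly n).eval x = hermiteH n x := by
  induction n using Nat.twoStepInduction with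
  | zero => simp [hermitePoly, hermiteH]
  | one => simp [hermitePoly, hermiteH]
  | more n ih₀ ih₁ =>
    simp only [hermitePoly_succ_succ, hermiteH, eval_sub, eval_mul, eval_C, eval_X, ih₀, ih₁]

noncomputable def gaussIntegral (b : ℝ) (p : ℝ[X]) : ℝ :=
  ∫ x : ℝ, exp (-b * x ^ 2) * p.eval x

section gaussIntegral

variable {b : ℝ}

theorem integrable_exp_neg_mul_sq_mul_eval (hb : 0 < b) (p : ℝ[X]) :
    Integrable fun x : ℝ => exp (-b * x ^ 2) * p.eval x := by
  induction p using Polynomial.induction_on' with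
  | add p q hp hq =>
    simp only [eval_add, mul_add]
    exact hp.add hq
  | monomial k a =>
    have := (integrable_rpow_mul_exp_neg_mul_sq hb
      (neg_one_lt_zero.trans_le k.cast_nonneg)).const_mul a
    simpa only [eval_monomial, rpow_natCast, mul_comm, mul_left_comm, mul_assoc] using this

theorem gaussIntegral_add (hb : 0 < b) (p q : ℝ[X]) :
    gaussIntegral b (p + q) = gaussIntegral b p + gaussIntegral b q := by
  simp only [gaussIntegral, eval_add, mul_add]
  exact integral_add (integrable_exp_neg_mul_sq_mul_eval hb p)
    (integrable_exp_neg_mul_sq_mul_eval hb q)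

theorem gaussIntegral_neg (p : ℝ[X]) : gaussIntegral b (-p) = -gaussIntegral b p := by
  simp only [gaussIntegral, eval_neg, mul_neg, integral_neg]

theorem gaussIntegral_derivative_sub_mul_X_eq_zero (hb : 0 < b) (p : ℝ[X]) :
    gaussIntegral b (derivative p - C (2 * b) * X * p) = 0 := by
  have hderiv : ∀ x : ℝ, HasDerivAt (fun x => exp (-b * x ^ 2) * p.eval x)
      (exp (-b * x ^ 2) * (derivative p - C (2 * b) * X * p).eval x) x := by
    intro x
    have hexp : HasDerivAt (fun x : ℝ => exp (-b * x ^ 2))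
        (exp (-b * x ^ 2) * (-b * (2 * x))) x := by
      simpa using ((hasDerivAt_pow 2 x).const_mul (-b)).exp
    refine (hexp.mul (p.hasDerivAt x)).congr_deriv ?_
    simp only [eval_sub, eval_mul, eval_C, eval_X]
    ring
  exact integral_eq_zero_of_hasDerivAt_of_integrable hderiv
    (integrable_exp_neg_mul_sq_mul_eval hb _) (integrable_exp_neg_mul_sq_mul_eval hb p)

end gaussIntegral

theorem hermitePoly_succ_mul_add_mul_succ (m n : ℕ) :
    hermitePoly (m + 1) * hermitePoly n + hermitePoly m * hermitePoly (n + 1) =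
      -(derivative (hermitePoly m * hermitePoly n) -
        C (2 * 2) * X * (hermitePoly m * hermitePoly n)) := by
  simp only [hermitePoly, derivative_mul, map_mul, map_ofNat]
  ring

theorem gaussIntegral_hermitePoly_succ_mul (m n : ℕ) :
    gaussIntegral 2 (hermitePoly (m + 1) * hermitePoly n) =
      -gaussIntegral 2 (hermitePoly m * hermitePoly (n + 1)) := by
  have h := congrArg (gaussIntegral 2) (hermitePoly_succ_mul_add_mul_succ m n)
  rw [gaussIntegral_add two_pos, gaussIntegral_neg,
    gaussIntegral_derivative_sub_mul_X_eq_zero two_pos] at h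
  linarith

theorem gaussIntegral_hermitePoly_mul (m n : ℕ) :
    gaussIntegral 2 (hermitePoly m * hermitePoly n) =
      (-1) ^ m * gaussIntegral 2 (hermitePoly 0 * hermitePoly (m + n)) := by
  induction m generalizing n with
  | zero => simp
  | succ m ih =>
    rw [gaussIntegral_hermitePoly_succ_mul, ih, pow_succ, Nat.add_right_comm, Nat.add_assoc]
    ring

noncomputable def hermiteNormSq (m : ℕ) : ℝ := 2 ^ m * (m.factorial : ℝ) * √π

theorem hermiteNormSq_pos (m : ℕ) : 0 < hermiteNormSq m := by
  unfold hermiteNormSq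
  have := sqrt_pos.2 pi_pos
  positivity

theorem rpow_neg_half_sq_mul_sqrt {x : ℝ} (hx : 0 < x) :
    (x ^ (-(1 : ℝ) / 2)) ^ 2 * √x = x ^ (-(1 : ℝ) / 2) := by
  rw [← rpow_natCast, ← rpow_mul hx.le, sqrt_eq_rpow, ← rpow_add hx]
  norm_num

theorem gramA_eq (T : ℝ) (hT : 0 < T) (m n : ℕ) :
    gramA T m n = (hermiteNormSq m * hermiteNormSq n * T) ^ (-(1 : ℝ) / 2) *
      gaussIntegral 2 (hermitePoly m * hermitePoly n) := by
  have hpsi : ∀ v, psi T m v * psi T n v =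
      (T ^ (-(1 : ℝ) / 2)) ^ 2 * (hermiteNormSq m * hermiteNormSq n) ^ (-(1 : ℝ) / 2) *
        (exp (-2 * (v / √T) ^ 2) * (hermitePoly m * hermitePoly n).eval (v / √T)) := by
    intro v
    have hexp : exp (-v ^ 2 / T) * exp (-v ^ 2 / T) = exp (-2 * (v / √T) ^ 2) := by
      rw [← exp_add, div_pow, sq_sqrt hT.le]
      ring_nf
    rw [mul_rpow (hermiteNormSq_pos m).le (hermiteNormSq_pos n).le, eval_mul, eval_hermitePoly,
      eval_hermitePoly, ← hexp]
    unfold psi hermiteNormSq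
    ring
  rw [gramA, integral_congr_ae (ae_of_all _ hpsi), integral_const_mul,
    Measure.integral_comp_div (fun u => exp (-2 * u ^ 2) * (hermitePoly m * hermitePoly n).eval u),
    abs_of_pos (sqrt_pos.2 hT), smul_eq_mul,
    mul_rpow (mul_pos (hermiteNormSq_pos m) (hermiteNormSq_pos n)).le hT.le, gaussIntegral]
  linear_combination (hermiteNormSq m * hermiteNormSq n) ^ (-(1 : ℝ) / 2) *
    (∫ u, exp (-2 * u ^ 2) * (hermitePoly m * hermitePoly n).eval u) *
    rpow_neg_half_sq_mul_sqrt hT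

theorem hermiteNormSq_zero_mul (m n : ℕ) :
    hermiteNormSq 0 * hermiteNormSq (m + n) =
      ((m + n).factorial / (m.factorial * n.factorial) : ℝ) *
        (hermiteNormSq m * hermiteNormSq n) := by
  unfold hermiteNormSq
  field_simp
  ring

theorem hermiteNormSq_mul_rpow_neg_half (m n : ℕ) {x : ℝ} (hx : 0 ≤ x) :
    (hermiteNormSq m * hermiteNormSq n * x) ^ (-(1 : ℝ) / 2) =
      √((m + n).factorial / (m.factorial * n.factorial) : ℝ) *
        (hermiteNormSq 0 * hermiteNormSq (m + n) * x) ^ (-(1 : ℝ) / 2) := by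
  have hF : (0 : ℝ) < (m + n).factorial / (m.factorial * n.factorial) := by positivity
  have hA : 0 ≤ hermiteNormSq m * hermiteNormSq n * x :=
    mul_nonneg (mul_pos (hermiteNormSq_pos m) (hermiteNormSq_pos n)).le hx
  rw [hermiteNormSq_zero_mul, mul_assoc _ (_ * _), mul_rpow hF.le hA, sqrt_eq_rpow, ← mul_assoc,
    ← rpow_add hF]
  norm_num

theorem gramA_reduction_to_first_row (T : ℝ) (hT : 0 < T) (m n : ℕ) :
    gramA T m n =
      (-1 : ℝ) ^ m *
        Real.sqrt ((Nat.factorial (m + n) : ℝ) /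
          ((Nat.factorial m : ℝ) * (Nat.factorial n : ℝ))) *
        gramA T 0 (m + n) := by
  rw [gramA_eq T hT, gramA_eq T hT, gaussIntegral_hermitePoly_mul,
    hermiteNormSq_mul_rpow_neg_half m n hT.le]
  ring
end

section
/- For every integer N ≥ 1 and every nonzero real number e, the truncated matrices fail to satisfy the skew-symmetry relation: A^N · D^N + (D^N)ᵀ · A^N ≠ 0. -/
open Real MeasureTheory Matrix Filter

/-- Truncated transport matrix D^N. -/
noncomputable def Dmat (T : ℝ) (e : ℝ) (N : ℕ) : Matrix (Fin (N + 1)) (Fin (N + 1)) ℝ :=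
  fun m n => if (n : ℕ) + 1 = (m : ℕ) then -e * Real.sqrt (2 * (m : ℝ) / T) else 0

/-- Truncated Gram matrix A^N. -/
noncomputable def Amat (T : ℝ) (N : ℕ) : Matrix (Fin (N + 1)) (Fin (N + 1)) ℝ :=
  fun m n => gramA T (m : ℕ) (n : ℕ)

/-!
The matrix `D^N` is supported on the subdiagonal, so in the `(N, N - 1)` entry of
`A^N D^N + (D^N)ᵀ A^N` the second term would need row `N + 1` of `D^N`, which does not exist,
and the first term is `a_{N,N} d_{N,N-1}`. Here `d_{N,N-1} ≠ 0` since `e ≠ 0`, and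
`a_{N,N} = ∫ ψ_N²` is positive: `ψ_N` is continuous, a polynomial times a Gaussian (hence square
integrable), and not identically zero because `H_N` has degree `N`.
-/

open Polynomial

noncomputable def physHermite : ℕ → ℝ[X]
  | 0 => 1
  | 1 => C 2 * X
  | n + 2 => C 2 * X * physHermite (n + 1) - C (2 * (n + 1 : ℝ)) * physHermite n

theorem eval_physHermite (n : ℕ) (x : ℝ) : (physHermite n).eval x = hermiteH n x := by
  induction n using Nat.twoStepInduction with
  | zero => simp [physHermite, hermiteH]
  | one => simp [physHermite, hermiteH]
  | more n ih₀ ih₁ => simp [physHermite, hermiteH, ih₀, ih₁]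

theorem degree_physHermite (n : ℕ) : (physHermite n).degree = n := by
  induction n using Nat.twoStepInduction with
  | zero => simp [physHermite]
  | one => simp [physHermite]
  | more n ih₀ ih₁ =>
    have hlead : (C 2 * X * physHermite (n + 1)).degree = ↑(n + 2) := by
      rw [degree_mul, degree_C_mul_X two_ne_zero, ih₁]
      norm_cast
      omega
    have hlower : (C (2 * (n + 1 : ℝ)) * physHermite n).degree < ↑(n + 2) := by
      rw [degree_C_mul (by positivity), ih₀]
      exact_mod_cast (by omega : n < n + 2)
    rw [physHermite, degree_sub_eq_left_of_degree_lt (hlead ▸ hlower), hlead]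

theorem exists_hermiteH_ne_zero (n : ℕ) : ∃ x, hermiteH n x ≠ 0 := by
  by_contra! h
  have hzero : physHermite n = 0 := Polynomial.funext (by simp [eval_physHermite, h])
  simpa [hzero] using degree_physHermite n

theorem continuous_hermiteH (n : ℕ) : Continuous (hermiteH n) := by
  simpa [eval_physHermite] using (physHermite n).continuous

theorem integrable_eval_mul_exp_neg_mul_sq {b : ℝ} (hb : 0 < b) (P : ℝ[X]) :
    Integrable (fun x : ℝ => P.eval x * exp (-b * x ^ 2)) := by
  induction P using Polynomial.induction_on' with
  | add p q hp hq => exact (hp.add hq).congr (Eventually.of_forall fun x => by simp [add_mul])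
  | monomial n a =>
    have h := integrable_rpow_mul_exp_neg_mul_sq hb (s := n)
      (by linarith [n.cast_nonneg (α := ℝ)])
    simp only [Real.rpow_natCast] at h
    simpa [mul_assoc] using h.const_mul a

theorem psi_eq_eval_mul_exp (T : ℝ) (m : ℕ) :
    ∃ Q : ℝ[X], ∀ v, psi T m v = Q.eval v * exp (-T⁻¹ * v ^ 2) := by
  refine ⟨C (T ^ (-(1 : ℝ) / 2) * ((2 : ℝ) ^ m * (m.factorial : ℝ) * √π) ^ (-(1 : ℝ) / 2)) *
    (physHermite m).comp (C (√T)⁻¹ * X), fun v => ?_⟩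
  simp only [psi, eval_mul, eval_C, eval_comp, eval_X, eval_physHermite]
  rw [div_eq_inv_mul v, show -v ^ 2 / T = -T⁻¹ * v ^ 2 by ring]
  ring

theorem integrable_psi_mul_psi {T : ℝ} (hT : 0 < T) (m n : ℕ) :
    Integrable (fun v => psi T m v * psi T n v) := by
  obtain ⟨P, hP⟩ := psi_eq_eval_mul_exp T m
  obtain ⟨Q, hQ⟩ := psi_eq_eval_mul_exp T n
  refine (integrable_eval_mul_exp_neg_mul_sq (by positivity : 0 < 2 * T⁻¹) (P * Q)).congr
    (Eventually.of_forall fun v => ?_)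
  have hexp : exp (-(2 * T⁻¹) * v ^ 2) = exp (-T⁻¹ * v ^ 2) * exp (-T⁻¹ * v ^ 2) := by
    rw [← exp_add]; ring_nf
  simp only [hP, hQ, eval_mul, hexp]
  ring

theorem continuous_psi (T : ℝ) (m : ℕ) : Continuous (psi T m) := by
  have := continuous_hermiteH m
  unfold psi
  fun_prop

theorem exists_psi_ne_zero {T : ℝ} (hT : 0 < T) (m : ℕ) : ∃ v, psi T m v ≠ 0 := by
  obtain ⟨x, hx⟩ := exists_hermiteH_ne_zero m
  refine ⟨x * √T, ?_⟩
  rw [psi, mul_div_cancel_right₀ x (sqrt_pos.2 hT).ne']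
  exact mul_ne_zero (by positivity) hx

theorem gramA_self_pos {T : ℝ} (hT : 0 < T) (m : ℕ) : 0 < gramA T m m := by
  obtain ⟨v, hv⟩ := exists_psi_ne_zero hT m
  exact integral_pos_of_integrable_nonneg_nonzero (x := v)
    ((continuous_psi T m).mul (continuous_psi T m)) (integrable_psi_mul_psi hT m m)
    (fun _ => mul_self_nonneg _) (mul_ne_zero hv hv)

theorem mul_Dmat_apply_castSucc (T e : ℝ) {N : ℕ} (M : Matrix (Fin (N + 2)) (Fin (N + 2)) ℝ)
    (i : Fin (N + 2)) (j : Fin (N + 1)) :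
    (M * Dmat T e (N + 1)) i j.castSucc = M i j.succ * (-e * √(2 * (j.succ : ℕ) / T)) := by
  rw [mul_apply, Fintype.sum_eq_single j.succ]
  · simp [Dmat]
  · intro k hk
    have : ¬ (j : ℕ) + 1 = k := fun h => hk (Fin.ext (by simp [h]))
    simp [Dmat, this]

theorem transpose_Dmat_mul_apply_last (T e : ℝ) {N : ℕ}
    (M : Matrix (Fin (N + 1)) (Fin (N + 1)) ℝ) (j : Fin (N + 1)) :
    ((Dmat T e N)ᵀ * M) (Fin.last N) j = 0 := by
  rw [mul_apply]
  refine Finset.sum_eq_zero fun k _ => ?_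
  have : ¬ N + 1 = (k : ℕ) := by omega
  simp [Dmat, this]

theorem truncated_skew_symmetry_fails (T : ℝ) (hT : 0 < T) (N : ℕ) (hN : 1 ≤ N)
    (e : ℝ) (he : e ≠ 0) :
    Amat T N * Dmat T e N + (Dmat T e N)ᵀ * Amat T N ≠ 0 := by
  obtain ⟨N, rfl⟩ : ∃ k, N = k + 1 := ⟨N - 1, by omega⟩
  intro h
  have hentry := congrFun (congrFun h (Fin.last (N + 1))) (Fin.last N).castSucc
  rw [Matrix.add_apply, mul_Dmat_apply_castSucc, transpose_Dmat_mul_apply_last, add_zero,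
    Matrix.zero_apply, Fin.succ_last] at hentry
  have hsqrt : 0 < √(2 * ((Fin.last (N + 1) : ℕ) : ℝ) / T) := by
    apply sqrt_pos.2
    simp only [Fin.val_last]
    positivity
  exact mul_ne_zero (gramA_self_pos hT (N + 1)).ne' (mul_ne_zero (neg_ne_zero.2 he) hsqrt.ne')
    hentry
end

section
/- For every m ≥ 1 and every l with 0 ≤ l ≤ m−1, the extra-diagonal Gram coefficients satisfy the recurrence starting from the diagonal: a_{m−l−1, m+l+1} = −√( (m−l)/(m+l+1) ) · a_{m−l, m+l}. -/
open Real MeasureTheory Matrix Filter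

/-! Substituting `v = √T u` turns `a_{m,n}` into `(√T N_m N_n)⁻¹ ∫ H_m H_n e^{-2u²}` with
`N_m = √(2^m m! √π)`. Since `H_n' = 2n H_{n-1}`, the recurrence reads `H_{n+1} = 2u H_n - H_n'`,
so `(H_r H_q e^{-2u²})' = -(H_{r+1} H_q + H_r H_{q+1}) e^{-2u²}`; integrating over `ℝ` gives
`∫ H_r H_{q+1} e^{-2u²} = -∫ H_{r+1} H_q e^{-2u²}`. The square root is the ratio of
normalisations `N_{r+1} N_q / (N_r N_{q+1})`. -/

open Polynomial in
theorem exists_polynomial_eval_eq_hermiteH :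
    ∀ n : ℕ, ∃ P : ℝ[X], ∀ x, hermiteH n x = P.eval x
  | 0 => ⟨1, by simp [hermiteH]⟩
  | 1 => ⟨C 2 * X, by simp [hermiteH]⟩
  | n + 2 => by
    obtain ⟨P, hP⟩ := exists_polynomial_eval_eq_hermiteH (n + 1)
    obtain ⟨Q, hQ⟩ := exists_polynomial_eval_eq_hermiteH n
    exact ⟨C 2 * X * P - C (2 * ((n : ℝ) + 1)) * Q, fun x => by simp [hermiteH, hP, hQ]⟩

theorem hermiteH_succ (n : ℕ) (x : ℝ) :
    hermiteH (n + 1) x = 2 * x * hermiteH n x - 2 * n * hermiteH (n - 1) x := by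
  cases n <;> simp [hermiteH]

theorem hasDerivAt_hermiteH : ∀ (n : ℕ) (x : ℝ),
    HasDerivAt (hermiteH n) (2 * n * hermiteH (n - 1) x) x
  | 0, x => by simpa [hermiteH] using hasDerivAt_const x (1 : ℝ)
  | 1, x => by simpa [hermiteH] using (hasDerivAt_id' x).const_mul (2 : ℝ)
  | n + 2, x => by
    have hfun : hermiteH (n + 2) =
        fun y => 2 * y * hermiteH (n + 1) y - 2 * (n + 1) * hermiteH n y := by
      ext y; simp [hermiteH]
    rw [hfun]
    refine ((((hasDerivAt_id' x).const_mul 2).mul (hasDerivAt_hermiteH (n + 1) x)).sub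
      ((hasDerivAt_hermiteH n x).const_mul (2 * ((n : ℝ) + 1)))).congr_deriv ?_
    rw [show n + 2 - 1 = n + 1 from rfl, Nat.add_sub_cancel, hermiteH_succ n x]
    push_cast
    ring

theorem integrable_polynomial_eval_mul_exp_neg_mul_sq (P : Polynomial ℝ) {b : ℝ} (hb : 0 < b) :
    Integrable fun x : ℝ => P.eval x * exp (-b * x ^ 2) := by
  induction P using Polynomial.induction_on' with
  | add p q hp hq => simpa [add_mul, Pi.add_def] using hp.add hq
  | monomial n a =>
    have h := integrable_rpow_mul_exp_neg_mul_sq hb (s := n) (by linarith [n.cast_nonneg (α := ℝ)])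
    simpa [mul_assoc] using h.const_mul a

theorem integrable_hermiteH_mul_hermiteH_mul_gaussian (r q : ℕ) :
    Integrable fun u : ℝ => hermiteH r u * hermiteH q u * exp (-2 * u ^ 2) := by
  obtain ⟨P, hP⟩ := exists_polynomial_eval_eq_hermiteH r
  obtain ⟨Q, hQ⟩ := exists_polynomial_eval_eq_hermiteH q
  simpa [hP, hQ] using integrable_polynomial_eval_mul_exp_neg_mul_sq (P * Q) two_pos

theorem hasDerivAt_hermiteH_mul_hermiteH_mul_gaussian (r q : ℕ) (u : ℝ) :
    HasDerivAt (fun u => hermiteH r u * hermiteH q u * exp (-2 * u ^ 2))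
      (-(hermiteH (r + 1) u * hermiteH q u * exp (-2 * u ^ 2)
        + hermiteH r u * hermiteH (q + 1) u * exp (-2 * u ^ 2))) u := by
  have hgauss : HasDerivAt (fun u : ℝ => exp (-2 * u ^ 2))
      (exp (-2 * u ^ 2) * (-2 * (2 * u))) u := by
    simpa using ((hasDerivAt_pow 2 u).const_mul (-2 : ℝ)).exp
  refine (((hasDerivAt_hermiteH r u).mul (hasDerivAt_hermiteH q u)).mul hgauss).congr_deriv ?_
  rw [hermiteH_succ r, hermiteH_succ q, Pi.mul_apply]
  ring

theorem integral_hermiteH_mul_hermiteH_succ_mul_gaussian (r q : ℕ) :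
    ∫ u, hermiteH r u * hermiteH (q + 1) u * exp (-2 * u ^ 2)
      = -∫ u, hermiteH (r + 1) u * hermiteH q u * exp (-2 * u ^ 2) := by
  have h₁ := integrable_hermiteH_mul_hermiteH_mul_gaussian (r + 1) q
  have h₂ := integrable_hermiteH_mul_hermiteH_mul_gaussian r (q + 1)
  have hzero := integral_eq_zero_of_hasDerivAt_of_integrable
    (hasDerivAt_hermiteH_mul_hermiteH_mul_gaussian r q) (h₁.add h₂).neg
    (integrable_hermiteH_mul_hermiteH_mul_gaussian r q)
  rw [integral_neg, integral_add h₁ h₂, neg_eq_zero] at hzero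
  linarith

theorem rpow_neg_one_div_two_eq_inv_sqrt {x : ℝ} (hx : 0 ≤ x) : x ^ (-(1 : ℝ) / 2) = (√x)⁻¹ := by
  rw [neg_div, rpow_neg hx, sqrt_eq_rpow]

noncomputable def hermiteNorm (m : ℕ) : ℝ := √(2 ^ m * m.factorial * √π)

theorem hermiteNorm_succ (m : ℕ) : hermiteNorm (m + 1) = √(2 * (m + 1)) * hermiteNorm m := by
  rw [hermiteNorm, hermiteNorm, ← sqrt_mul (by positivity), Nat.factorial_succ]
  congr 1
  push_cast
  ring

theorem psi_eq (T : ℝ) (hT : 0 < T) (m : ℕ) (v : ℝ) :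
    psi T m v = exp (-v ^ 2 / T) * (√T)⁻¹ * (hermiteNorm m)⁻¹ * hermiteH m (v / √T) := by
  rw [psi, rpow_neg_one_div_two_eq_inv_sqrt hT.le,
    rpow_neg_one_div_two_eq_inv_sqrt (by positivity), hermiteNorm]

theorem gramA_eq_integral (T : ℝ) (hT : 0 < T) (m n : ℕ) :
    gramA T m n = (√T * hermiteNorm m * hermiteNorm n)⁻¹ *
      ∫ u, hermiteH m u * hermiteH n u * exp (-2 * u ^ 2) := by
  have hsqrt : 0 < √T := sqrt_pos.mpr hT
  have hgauss (v : ℝ) : exp (-v ^ 2 / T) * exp (-v ^ 2 / T) = exp (-2 * (v / √T) ^ 2) := by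
    rw [← exp_add, div_pow, sq_sqrt hT.le]
    ring_nf
  set f : ℝ → ℝ := fun u => hermiteH m u * hermiteH n u * exp (-2 * u ^ 2)
  have hpoint : (fun v => psi T m v * psi T n v) =
      fun v => ((√T)⁻¹ ^ 2 * (hermiteNorm m * hermiteNorm n)⁻¹) * f (v / √T) := by
    ext v
    simp only [f, psi_eq T hT]
    rw [← hgauss]
    ring
  rw [gramA, hpoint, integral_const_mul, Measure.integral_comp_div, abs_of_pos hsqrt, smul_eq_mul]
  field_simp

theorem gramA_succ_right (T : ℝ) (hT : 0 < T) (p q : ℕ) :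
    gramA T p (q + 1) = -√((p + 1) / (q + 1)) * gramA T (p + 1) q := by
  have hratio : √((p + 1) / (q + 1)) * √(2 * (q + 1)) = √(2 * (p + 1)) := by
    rw [← sqrt_mul (by positivity)]
    congr 1
    field_simp
  rw [gramA_eq_integral T hT, gramA_eq_integral T hT, hermiteNorm_succ, hermiteNorm_succ,
    integral_hermiteH_mul_hermiteH_succ_mul_gaussian, ← hratio]
  field_simp

theorem gramA_extradiag_recurrence (T : ℝ) (hT : 0 < T) (m l : ℕ) (hm : 1 ≤ m)
    (hl : l ≤ m - 1) :
    gramA T (m - l - 1) (m + l + 1) =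
      -Real.sqrt (((m : ℝ) - (l : ℝ)) / ((m : ℝ) + (l : ℝ) + 1)) *
        gramA T (m - l) (m + l) := by
  obtain ⟨p, rfl⟩ : ∃ p, m = l + p + 1 := ⟨m - l - 1, by omega⟩
  have hidx : l + p + 1 - l = p + 1 := by omega
  rw [hidx, Nat.add_sub_cancel, gramA_succ_right T hT]
  congr 3
  push_cast
  ring
end
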